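/- Let E₁ be a nonempty set, N ≥ 1 an integer, β > 0, let U : E₁ → ℝ be bounded, and let W : E₁ × E₁ → ℝ be bounded and symmetric (W(u,v) = W(v,u)). For x ∈ E₁^N define U_N(x) = Σ_{i=1}^N ( U(x_i) + (1/(2N)) Σ_{j≠i} W(x_i, x_j) ), and for i ∈ {1,…,N} and y ∈ E₁ let x^{i→y} be x with its i-th coordinate replaced by y, and set p_i(x,y) = min(1, exp(β (U_N(x) − U_N(x^{i→y})))). Then for all i, all x ∈ E₁^N and all y ∈ E₁, p_i(x,y) ≥ exp(−β (osc(U) + osc(W))), where osc(f) = sup f − inf f. -/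

import Mathlib

open Finset

/-- The oscillation `osc f = sup f - inf f` of a real-valued function. -/
noncomputable def oscOf {α : Type*} (f : α → ℝ) : ℝ :=
  sSup (Set.range f) - sInf (Set.range f)

/-- The mean-field energy
`U_N(x) = ∑_i ( U(x_i) + (1/(2N)) ∑_{j ≠ i} W(x_i, x_j) )`. -/
noncomputable def meanFieldEnergy {E₁ : Type*} (N : ℕ) (U : E₁ → ℝ) (W : E₁ → E₁ → ℝ)
    (x : Fin N → E₁) : ℝ :=
  ∑ i, (U (x i) + (1 / (2 * (N : ℝ))) * ∑ j ∈ Finset.univ.erase i, W (x i) (x j))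

/-- The Metropolis–Hastings acceptance probability
`p_i(x,y) = min(1, exp(β (U_N(x) - U_N(x^{i→y}))))` for moving the `i`-th particle to `y`. -/
noncomputable def mhAccept {E₁ : Type*} (N : ℕ) (β : ℝ) (U : E₁ → ℝ) (W : E₁ → E₁ → ℝ)
    (i : Fin N) (x : Fin N → E₁) (y : E₁) : ℝ :=
  min 1 (Real.exp (β * (meanFieldEnergy N U W x -
    meanFieldEnergy N U W (Function.update x i y))))

/-! Moving particle `i` changes the energy of its own site by at most `osc U + osc W / 2`, and the
energy of every other site `k` only through the single pair term `W(x_k, x_i) / (2N)`. The `N - 1`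
other sites thus contribute at most `osc W / 2` in total, so `U_N(x^{i→y}) - U_N(x) ≤ osc U + osc W`,
and the bound on `p_i(x,y)` follows from the monotonicity of `exp`. -/

open Function

lemma sub_le_oscOf {α : Type*} {f : α → ℝ} (ha : BddAbove (Set.range f))
    (hb : BddBelow (Set.range f)) (a b : α) : f a - f b ≤ oscOf f := by
  have hsup : f a ≤ sSup (Set.range f) := le_csSup ha ⟨a, rfl⟩
  have hinf : sInf (Set.range f) ≤ f b := csInf_le hb ⟨b, rfl⟩
  unfold oscOf
  linarith

noncomputable def siteEnergy {E : Type*} (N : ℕ) (U : E → ℝ) (W : E → E → ℝ)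
    (x : Fin N → E) (k : Fin N) : ℝ :=
  U (x k) + (1 / (2 * (N : ℝ))) * ∑ j ∈ univ.erase k, W (x k) (x j)

section Energy

variable {E : Type*} {N : ℕ} {U : E → ℝ} {W : E → E → ℝ} {A B : ℝ}

lemma meanFieldEnergy_eq_sum_siteEnergy (x : Fin N → E) :
    meanFieldEnergy N U W x = ∑ k, siteEnergy N U W x k :=
  rfl

lemma siteEnergy_sub_siteEnergy (x x' : Fin N → E) (k : Fin N) :
    siteEnergy N U W x' k - siteEnergy N U W x k =
      (U (x' k) - U (x k)) +
        1 / (2 * (N : ℝ)) * ∑ j ∈ univ.erase k, (W (x' k) (x' j) - W (x k) (x j)) := by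
  rw [siteEnergy, siteEnergy, sum_sub_distrib]
  ring

lemma siteEnergy_update_self_sub_le (hU : ∀ a b, U a - U b ≤ A)
    (hW : ∀ a b c d, W a b - W c d ≤ B) (i : Fin N) (x : Fin N → E) (y : E) :
    siteEnergy N U W (update x i y) i - siteEnergy N U W x i ≤ A + B / 2 := by
  have hN : (0 : ℝ) < N := Nat.cast_pos.2 i.pos
  have hB : 0 ≤ B := by simpa using hW (x i) (x i) (x i) (x i)
  have hcard : ((univ.erase i).card : ℝ) ≤ N := by
    exact_mod_cast (card_le_univ _).trans_eq (Fintype.card_fin N)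
  calc siteEnergy N U W (update x i y) i - siteEnergy N U W x i
      = (U (update x i y i) - U (x i)) + 1 / (2 * (N : ℝ)) *
          ∑ j ∈ univ.erase i, (W (update x i y i) (update x i y j) - W (x i) (x j)) :=
        siteEnergy_sub_siteEnergy x _ i
    _ ≤ A + 1 / (2 * (N : ℝ)) * ((univ.erase i).card • B) := by
        gcongr
        · exact hU _ _
        · exact sum_le_card_nsmul _ _ _ fun j _ => hW _ _ _ _
    _ ≤ A + 1 / (2 * (N : ℝ)) * (N * B) := by
        rw [nsmul_eq_mul]
        gcongr
    _ = A + B / 2 := by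
        field_simp

lemma siteEnergy_update_of_ne_sub_le (hW : ∀ a b c d, W a b - W c d ≤ B) {i k : Fin N}
    (hki : k ≠ i) (x : Fin N → E) (y : E) :
    siteEnergy N U W (update x i y) k - siteEnergy N U W x k ≤ B / (2 * N) := by
  have hi : i ∈ univ.erase k := mem_erase.2 ⟨hki.symm, mem_univ i⟩
  -- only the pair `(k, i)` sees the moved particle
  have hpairs : ∑ j ∈ univ.erase k, (W (update x i y k) (update x i y j) - W (x k) (x j)) =
      W (x k) y - W (x k) (x i) := by
    rw [sum_eq_single_of_mem i hi fun j _ hji => by simp [update_of_ne hki, update_of_ne hji]]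
    simp [update_of_ne hki]
  rw [siteEnergy_sub_siteEnergy, hpairs, update_of_ne hki, sub_self, zero_add,
    one_div_mul_eq_div]
  gcongr
  exact hW _ _ _ _

lemma meanFieldEnergy_update_sub_le (hU : ∀ a b, U a - U b ≤ A)
    (hW : ∀ a b c d, W a b - W c d ≤ B) (i : Fin N) (x : Fin N → E) (y : E) :
    meanFieldEnergy N U W (update x i y) - meanFieldEnergy N U W x ≤ A + B := by
  have hN : (0 : ℝ) < N := Nat.cast_pos.2 i.pos
  have hB : 0 ≤ B := by simpa using hW y y y y
  have hcard : ((univ.erase i).card : ℝ) ≤ N := by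
    exact_mod_cast (card_le_univ _).trans_eq (Fintype.card_fin N)
  have hothers : ∑ k ∈ univ.erase i,
      (siteEnergy N U W (update x i y) k - siteEnergy N U W x k) ≤ B / 2 :=
    calc _ ≤ (univ.erase i).card • (B / (2 * N)) :=
          sum_le_card_nsmul _ _ _ fun k hk =>
            siteEnergy_update_of_ne_sub_le hW (ne_of_mem_erase hk) x y
      _ ≤ N * (B / (2 * N)) := by
          rw [nsmul_eq_mul]
          gcongr
      _ = B / 2 := by
          field_simp
  rw [meanFieldEnergy_eq_sum_siteEnergy, meanFieldEnergy_eq_sum_siteEnergy, ← sum_sub_distrib,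
    ← add_sum_erase _ _ (mem_univ i)]
  linarith [siteEnergy_update_self_sub_le hU hW i x y]

lemma exp_neg_mul_le_mhAccept {β C : ℝ} (hβ : 0 ≤ β) (hC : 0 ≤ C) {i : Fin N}
    {x : Fin N → E} {y : E}
    (h : meanFieldEnergy N U W (update x i y) - meanFieldEnergy N U W x ≤ C) :
    Real.exp (-β * C) ≤ mhAccept N β U W i x y :=
  le_min (Real.exp_le_one_iff.2 (by nlinarith)) (Real.exp_le_exp.2 (by nlinarith))

end Energy

theorem mhAccept_lower_bound_general {E₁ : Type*} (N : ℕ)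
    (β : ℝ) (hβ : 0 < β)
    (U : E₁ → ℝ) (hUa : BddAbove (Set.range U)) (hUb : BddBelow (Set.range U))
    (W : E₁ → E₁ → ℝ)
    (hWa : BddAbove (Set.range fun p : E₁ × E₁ => W p.1 p.2))
    (hWb : BddBelow (Set.range fun p : E₁ × E₁ => W p.1 p.2))
    (i : Fin N) (x : Fin N → E₁) (y : E₁) :
    Real.exp (-β * (oscOf U + oscOf fun p : E₁ × E₁ => W p.1 p.2)) ≤
      mhAccept N β U W i x y := by
  have hU : ∀ a b, U a - U b ≤ oscOf U := sub_le_oscOf hUa hUb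
  have hW : ∀ a b c d, W a b - W c d ≤ oscOf fun p : E₁ × E₁ => W p.1 p.2 :=
    fun a b c d => sub_le_oscOf hWa hWb (a, b) (c, d)
  have hosc : 0 ≤ oscOf U + oscOf fun p : E₁ × E₁ => W p.1 p.2 := by
    linarith [hU y y, hW y y y y]
  exact exp_neg_mul_le_mhAccept hβ.le hosc (meanFieldEnergy_update_sub_le hU hW i x y)

/-- Uniform lower bound for the Metropolis–Hastings acceptance probability:
`p_i(x,y) ≥ exp(-β (osc U + osc W))`. -/
theorem mhAccept_lower_bound {E₁ : Type*} [Nonempty E₁] (N : ℕ) (hN : 1 ≤ N)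
    (β : ℝ) (hβ : 0 < β)
    (U : E₁ → ℝ) (hUa : BddAbove (Set.range U)) (hUb : BddBelow (Set.range U))
    (W : E₁ → E₁ → ℝ)
    (hWa : BddAbove (Set.range fun p : E₁ × E₁ => W p.1 p.2))
    (hWb : BddBelow (Set.range fun p : E₁ × E₁ => W p.1 p.2))
    (hWsymm : ∀ u v, W u v = W v u)
    (i : Fin N) (x : Fin N → E₁) (y : E₁) :
    Real.exp (-β * (oscOf U + oscOf fun p : E₁ × E₁ => W p.1 p.2)) ≤
      mhAccept N β U W i x y :=
  mhAccept_lower_bound_general N β hβ U hUa hUb W hWa hWb i x y
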